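/- arXiv:2604.02264 — 9 statements merged into one kernel-verified Lean document; each statement's English description precedes it below -/
import Mathlib

section
/- Let F be a bipartite graph with bipartition S ∪ T such that some vertex v* ∈ T is adjacent to every vertex of S, and suppose F contains a cycle. Then any ν ⊆ V(F) with |ν| ≥ 3 and (e(F[ν])-1)/(|ν|-2) = m_2(F) must contain v*. -/
/-!
Suppose `v* ∉ ν` and let `k = |ν ∩ S|`. If `k ≤ 1`, then `F[ν]` is a star plus isolated
vertices, so `e(F[ν]) < |ν|` and the density of `ν` is at most `1 < m₂(F)`. If `k ≥ 2`, then
`|ν ∩ T| ≤ |ν| - 2`, hence `e(F[ν]) ≤ k (|ν| - 2)`; adding `v*` adds one vertex and at least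
`k` edges, which strictly increases the density, so `ν` was not maximal.
-/

open Finset

/-- Number of edges of `F` induced by the vertex set `ν`. -/
def eInd {V : Type*} [Fintype V] [DecidableEq V] (F : SimpleGraph V) [DecidableRel F.Adj]
    (ν : Finset V) : ℕ :=
  (F.edgeFinset.filter (fun e => ∀ v ∈ e, v ∈ ν)).card

/-- The 2-density of `F`: the maximum of `(e(F[ν]) - 1)/(|ν| - 2)` over `ν` with `|ν| ≥ 3`. -/
noncomputable def m2 {V : Type*} [Fintype V] [DecidableEq V] (F : SimpleGraph V)
    [DecidableRel F.Adj] : ℝ :=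
  sSup {x : ℝ | ∃ ν : Finset V, 3 ≤ ν.card ∧
    x = ((eInd F ν : ℝ) - 1) / ((ν.card : ℝ) - 2)}

noncomputable def density {V : Type*} [Fintype V] [DecidableEq V] (F : SimpleGraph V)
    [DecidableRel F.Adj] (ν : Finset V) : ℝ :=
  ((eInd F ν : ℝ) - 1) / ((ν.card : ℝ) - 2)

section Density

variable {V : Type*} [Fintype V] [DecidableEq V] (F : SimpleGraph V) [DecidableRel F.Adj]

theorem density_le_m2 {ν : Finset V} (hν : 3 ≤ ν.card) : density F ν ≤ m2 F := by
  refine le_csSup ?_ ⟨ν, hν, rfl⟩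
  refine (Set.finite_range (density F)).bddAbove.mono ?_
  rintro x ⟨μ, -, rfl⟩
  exact ⟨μ, rfl⟩

theorem density_le_one {ν : Finset V} (hν : 3 ≤ ν.card) (he : eInd F ν < ν.card) :
    density F ν ≤ 1 := by
  have hν' : (3 : ℝ) ≤ ν.card := by exact_mod_cast hν
  have he' : (eInd F ν : ℝ) + 1 ≤ ν.card := by exact_mod_cast he
  rw [density, div_le_one (by linarith)]
  linarith

theorem one_lt_m2 {ν : Finset V} (hν : 3 ≤ ν.card) (he : ν.card ≤ eInd F ν) : 1 < m2 F := by
  have hν' : (3 : ℝ) ≤ ν.card := by exact_mod_cast hν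
  have he' : (ν.card : ℝ) ≤ eInd F ν := by exact_mod_cast he
  refine lt_of_lt_of_le ?_ (density_le_m2 F hν)
  rw [density, lt_div_iff₀ (by linarith)]
  linarith

theorem density_lt_density_insert {ν : Finset V} {v : V} (hv : v ∉ ν) (hν : 3 ≤ ν.card)
    (k : ℕ) (hk : eInd F ν + k ≤ eInd F (insert v ν)) (he : eInd F ν ≤ k * (ν.card - 2)) :
    density F ν < density F (insert v ν) := by
  have hν' : (3 : ℝ) ≤ ν.card := by exact_mod_cast hν
  have hk' : (eInd F ν : ℝ) + k ≤ eInd F (insert v ν) := by exact_mod_cast hk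
  have he' : (eInd F ν : ℝ) ≤ k * ((ν.card : ℝ) - 2) := by
    rw [← Nat.cast_ofNat, ← Nat.cast_sub (by omega)]
    exact_mod_cast he
  rw [density, density, card_insert_of_notMem hv, Nat.cast_add, Nat.cast_one,
    div_lt_div_iff₀ (by linarith) (by linarith)]
  nlinarith

theorem eInd_add_card_inter_le_eInd_insert (S : Finset V) {v : V} (hS : ∀ u ∈ S, F.Adj v u)
    {ν : Finset V} (hv : v ∉ ν) : eInd F ν + (ν ∩ S).card ≤ eInd F (insert v ν) := by
  set A := F.edgeFinset.filter (fun e => ∀ w ∈ e, w ∈ ν)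
  set B := (ν ∩ S).image (fun u => s(v, u))
  have hdisj : Disjoint A B := by
    rw [disjoint_left]
    rintro e heA heB
    obtain ⟨u, -, rfl⟩ := mem_image.mp heB
    exact hv ((mem_filter.mp heA).2 v (Sym2.mem_mk_left v u))
  have hsub : A ∪ B ⊆ F.edgeFinset.filter (fun e => ∀ w ∈ e, w ∈ insert v ν) := by
    intro e he
    rcases mem_union.mp he with heA | heB
    · obtain ⟨he, hw⟩ := mem_filter.mp heA
      exact mem_filter.mpr ⟨he, fun w hw' => mem_insert_of_mem (hw w hw')⟩
    · obtain ⟨u, hu, rfl⟩ := mem_image.mp heB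
      rw [mem_inter] at hu
      refine mem_filter.mpr ⟨SimpleGraph.mem_edgeFinset.mpr (hS u hu.2), fun w hw => ?_⟩
      rcases Sym2.mem_iff.mp hw with rfl | rfl
      · exact mem_insert_self _ _
      · exact mem_insert_of_mem hu.1
  have hB : B.card = (ν ∩ S).card :=
    card_image_of_injective _ fun _ _ h => Sym2.congr_right.mp h
  calc eInd F ν + (ν ∩ S).card = (A ∪ B).card := by rw [card_union_of_disjoint hdisj, hB]; rfl
    _ ≤ eInd F (insert v ν) := card_le_card hsub

end Density

theorem card_inter_add_card_inter_le {α : Type*} [DecidableEq α] {S T : Finset α}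
    (hDisj : Disjoint S T) (ν : Finset α) : (ν ∩ S).card + (ν ∩ T).card ≤ ν.card := by
  rw [← card_union_of_disjoint (hDisj.mono inter_subset_right inter_subset_right)]
  exact card_le_card (union_subset inter_subset_left inter_subset_left)

section Bipartite

variable {V : Type*} [Fintype V] [DecidableEq V] {F : SimpleGraph V} [DecidableRel F.Adj]
  {S T : Finset V}

theorem eInd_le_card_inter_mul_card_inter
    (hBip : ∀ u v, F.Adj u v → (u ∈ S ∧ v ∈ T) ∨ (u ∈ T ∧ v ∈ S)) (ν : Finset V) :
    eInd F ν ≤ (ν ∩ S).card * (ν ∩ T).card := by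
  have hsub : F.edgeFinset.filter (fun e => ∀ v ∈ e, v ∈ ν) ⊆
      ((ν ∩ S) ×ˢ (ν ∩ T)).image (fun p => s(p.1, p.2)) := by
    intro e he
    obtain ⟨he, hν⟩ := mem_filter.mp he
    induction e using Sym2.ind with
    | _ a b =>
      have ha := hν a (Sym2.mem_mk_left a b)
      have hb := hν b (Sym2.mem_mk_right a b)
      rcases hBip a b (SimpleGraph.mem_edgeFinset.mp he) with ⟨haS, hbT⟩ | ⟨haT, hbS⟩
      · exact mem_image.mpr ⟨(a, b), by simp [*], rfl⟩
      · exact mem_image.mpr ⟨(b, a), by simp [*], Sym2.eq_swap⟩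
  calc eInd F ν ≤ _ := card_le_card hsub
    _ ≤ _ := card_image_le
    _ = _ := card_product _ _

theorem eInd_lt_card_of_card_inter_le_one
    (hBip : ∀ u v, F.Adj u v → (u ∈ S ∧ v ∈ T) ∨ (u ∈ T ∧ v ∈ S)) (hDisj : Disjoint S T)
    {ν : Finset V} (hν : ν.Nonempty) (hS : (ν ∩ S).card ≤ 1 ∨ (ν ∩ T).card ≤ 1) :
    eInd F ν < ν.card := by
  have he := eInd_le_card_inter_mul_card_inter hBip ν
  have hn := card_inter_add_card_inter_le hDisj ν
  have hpos := hν.card_pos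
  rcases hS with hS | hT
  · interval_cases (ν ∩ S).card <;> omega
  · interval_cases (ν ∩ T).card <;> omega

theorem three_le_card_of_card_le_eInd
    (hBip : ∀ u v, F.Adj u v → (u ∈ S ∧ v ∈ T) ∨ (u ∈ T ∧ v ∈ S)) (hDisj : Disjoint S T)
    {ν : Finset V} (hν : ν.Nonempty) (he : ν.card ≤ eInd F ν) : 3 ≤ ν.card := by
  by_contra! h
  have hn := card_inter_add_card_inter_le hDisj ν
  have := eInd_lt_card_of_card_inter_le_one hBip hDisj hν (by omega)
  omega

end Bipartite

theorem stmt2_general {V : Type*} [Fintype V] [DecidableEq V] (F : SimpleGraph V) [DecidableRel F.Adj]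
    (S T : Finset V) (vstar : V)
    (hDisj : Disjoint S T)
    (hBip : ∀ u v, F.Adj u v → (u ∈ S ∧ v ∈ T) ∨ (u ∈ T ∧ v ∈ S))
    (hComp : ∀ u ∈ S, F.Adj vstar u)
    (hcycle : ∃ ν : Finset V, ν.Nonempty ∧ ν.card ≤ eInd F ν) :
    ∀ ν : Finset V, 3 ≤ ν.card →
      ((eInd F ν : ℝ) - 1) / ((ν.card : ℝ) - 2) = m2 F → vstar ∈ ν := by
  obtain ⟨μ, hμ, hμe⟩ := hcycle
  have hm2 : 1 < m2 F :=
    one_lt_m2 F (three_le_card_of_card_le_eInd hBip hDisj hμ hμe) hμe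
  intro ν hν hmax
  change density F ν = m2 F at hmax
  by_contra hv
  rcases le_or_gt (ν ∩ S).card 1 with hS | hS
  · have := density_le_one F hν
      (eInd_lt_card_of_card_inter_le_one hBip hDisj (card_pos.mp (by omega)) (.inl hS))
    linarith
  · have he : eInd F ν ≤ (ν ∩ S).card * (ν.card - 2) :=
      (eInd_le_card_inter_mul_card_inter hBip ν).trans <| Nat.mul_le_mul_left _ <| by
        have := card_inter_add_card_inter_le hDisj ν
        omega
    have := density_lt_density_insert F hv hν _
      (eInd_add_card_inter_le_eInd_insert F S hComp hv) he
    have := density_le_m2 F (ν := insert vstar ν) (by rw [card_insert_of_notMem hv]; omega)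
    linarith

/-- Let `F` be bipartite with parts `S, T` and `v* ∈ T` adjacent to every vertex of `S`, and
suppose `F` contains a cycle.  Then any `ν ⊆ V(F)` with `|ν| ≥ 3` achieving
`(e(F[ν]) - 1)/(|ν| - 2) = m₂(F)` contains `v*`. -/
theorem stmt2 {V : Type*} [Fintype V] [DecidableEq V] (F : SimpleGraph V) [DecidableRel F.Adj]
    (S T : Finset V) (vstar : V)
    (hUnion : S ∪ T = Finset.univ) (hDisj : Disjoint S T)
    (hBip : ∀ u v, F.Adj u v → (u ∈ S ∧ v ∈ T) ∨ (u ∈ T ∧ v ∈ S))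
    (hv : vstar ∈ T) (hComp : ∀ u ∈ S, F.Adj vstar u)
    (hcycle : ∃ ν : Finset V, ν.Nonempty ∧ ν.card ≤ eInd F ν) :
    ∀ ν : Finset V, 3 ≤ ν.card →
      ((eInd F ν : ℝ) - 1) / ((ν.card : ℝ) - 2) = m2 F → vstar ∈ ν :=
  stmt2_general F S T vstar hDisj hBip hComp hcycle
end

section
/- Let F be r-semi-bounded with respect to (S, T, v*) and let ν ⊆ V(F) with e(F[ν]) ≥ 1. Then f(ν) ≥ e(F[ν]), where f(ν) = |S ∩ ν| + Σ_{v ∈ T∩ν} deg_F(v) − max{deg_F(v) : v ∈ T∩ν, deg_{F[ν]}(v) ≥ 1}. -/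
open Finset

/-- The quantity `f(ν) = |S ∩ ν| + Σ_{v ∈ T ∩ ν} deg_F(v) -
max{deg_F(v) : v ∈ T ∩ ν with a neighbour in ν}` for an `r`-semi-bounded graph `F`. -/
def fI {V : Type*} [Fintype V] [DecidableEq V] (F : SimpleGraph V) [DecidableRel F.Adj]
    (S T ν : Finset V) : ℤ :=
  ((S ∩ ν).card : ℤ) + ∑ v ∈ T ∩ ν, (F.degree v : ℤ)
    - (((T ∩ ν).filter (fun v => ∃ u ∈ ν, F.Adj v u)).sup (fun v => F.degree v) : ℕ)

/-!
Every edge of `F[ν]` has exactly one endpoint in `T`, so `e(ν)` is the sum over `v ∈ T ∩ ν` of the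
number `d_ν(v)` of neighbours of `v` in `ν`. Each `d_ν(v)` is at most `deg_F(v)`, and for a vertex
`w` of maximum degree we use instead `d_ν(w) ≤ |S ∩ ν|`, as all neighbours of `w` lie in `S`.
-/

theorem Finset.sum_add_sup_le_add_sum {ι : Type*} [DecidableEq ι] (s : Finset ι)
    {a b : ι → ℕ} {c : ℕ} (hab : ∀ i ∈ s, a i ≤ b i) (hac : ∀ i ∈ s, a i ≤ c) :
    ∑ i ∈ s, a i + s.sup b ≤ c + ∑ i ∈ s, b i := by
  rcases s.eq_empty_or_nonempty with rfl | hs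
  · simp
  obtain ⟨w, hw, hsup⟩ := s.exists_mem_eq_sup hs b
  rw [← add_sum_erase s a hw, ← add_sum_erase s b hw, hsup]
  have hrest : ∑ i ∈ s.erase w, a i ≤ ∑ i ∈ s.erase w, b i :=
    sum_le_sum fun i hi => hab i (mem_of_mem_erase hi)
  have hwc := hac w hw
  omega

namespace SimpleGraph

variable {V : Type*} {F : SimpleGraph V} [DecidableRel F.Adj]

variable (F) in
/-- The degree of `v` in `F[ν]` when `v ∈ ν`. -/
def degreeIn (ν : Finset V) (v : V) : ℕ := #{u ∈ ν | F.Adj v u}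

theorem degreeIn_le_degree [Fintype V] (ν : Finset V) (v : V) : F.degreeIn ν v ≤ F.degree v := by
  rw [← card_neighborFinset_eq_degree]
  exact card_le_card fun u hu => (mem_neighborFinset F v u).mpr (mem_filter.mp hu).2

theorem degreeIn_le_card_inter [DecidableEq V] {S : Finset V} {w : V}
    (hw : ∀ u, F.Adj w u → u ∈ S) (ν : Finset V) : F.degreeIn ν w ≤ #(S ∩ ν) :=
  card_le_card fun u hu => by
    rw [mem_filter] at hu
    exact mem_inter.mpr ⟨hw u hu.2, hu.1⟩

/-- Each edge of `F[ν]` is counted at its unique endpoint in `T`. -/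
theorem eInd_eq_sum_degreeIn [Fintype V] [DecidableEq V] {T : Finset V}
    (hT : ∀ u v, F.Adj u v → (u ∈ T ↔ v ∉ T)) (ν : Finset V) :
    eInd F ν = ∑ v ∈ T ∩ ν, F.degreeIn ν v := by
  simp only [eInd, degreeIn, ← card_sigma]
  symm
  refine card_bij (fun p _ => s(p.1, p.2)) ?_ ?_ ?_
  · rintro ⟨v, u⟩ h
    simp only [mem_sigma, mem_inter, mem_filter] at h
    simp only [mem_filter, mem_edgeFinset, mem_edgeSet, Sym2.mem_iff, forall_eq_or_imp, forall_eq]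
    exact ⟨h.2.2, h.1.2, h.2.1⟩
  · rintro ⟨v, u⟩ h ⟨v', u'⟩ h' heq
    simp only [mem_sigma, mem_inter, mem_filter] at h h'
    rcases Sym2.eq_iff.mp heq with ⟨rfl, rfl⟩ | ⟨rfl, rfl⟩
    · rfl
    · exact absurd h.1.1 ((hT _ _ h'.2.2).mp h'.1.1)
  · intro e he
    induction e using Sym2.ind with | h a b => ?_
    simp only [mem_filter, mem_edgeFinset, mem_edgeSet, Sym2.mem_iff, forall_eq_or_imp,
      forall_eq] at he
    obtain ⟨hab, ha, hb⟩ := he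
    by_cases haT : a ∈ T
    · exact ⟨⟨a, b⟩, by simp [haT, ha, hb, hab], rfl⟩
    · have hbT : b ∈ T := not_not.mp (mt (hT a b hab).mpr haT)
      exact ⟨⟨b, a⟩, by simp [hbT, ha, hb, hab.symm], Sym2.eq_swap⟩

end SimpleGraph

theorem stmt3_general {V : Type*} [Fintype V] [DecidableEq V] (F : SimpleGraph V) [DecidableRel F.Adj]
    (S T : Finset V)
    (hDisj : Disjoint S T)
    (hBip : ∀ u v, F.Adj u v → (u ∈ S ∧ v ∈ T) ∨ (u ∈ T ∧ v ∈ S))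
    (ν : Finset V) :
    (eInd F ν : ℤ) ≤ fI F S T ν := by
  have hT : ∀ u v, F.Adj u v → (u ∈ T ↔ v ∉ T) := fun u v huv => by
    rcases hBip u v huv with ⟨hu, hv⟩ | ⟨hu, hv⟩
    · simp [disjoint_left.mp hDisj hu, hv]
    · simp [hu, disjoint_left.mp hDisj hv]
  have hS : ∀ w ∈ T, ∀ u, F.Adj w u → u ∈ S := fun w hw u hwu => by
    rcases hBip w u hwu with ⟨hw', -⟩ | ⟨-, hu⟩
    · exact absurd hw (disjoint_left.mp hDisj hw')
    · exact hu
  have hcount : eInd F ν + (T ∩ ν).sup (fun v => F.degree v) ≤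
      #(S ∩ ν) + ∑ v ∈ T ∩ ν, F.degree v := by
    rw [F.eInd_eq_sum_degreeIn hT]
    exact (T ∩ ν).sum_add_sup_le_add_sum (fun v _ => F.degreeIn_le_degree ν v)
      (fun w hw => F.degreeIn_le_card_inter (hS w (mem_inter.mp hw).1) ν)
  have hsup : ((T ∩ ν).filter (fun v => ∃ u ∈ ν, F.Adj v u)).sup (fun v => F.degree v) ≤
      (T ∩ ν).sup (fun v => F.degree v) := sup_mono (filter_subset _ _)
  rw [fI, ← Nat.cast_sum]
  omega

/-- If `F` is `r`-semi-bounded with respect to `(S, T, v*)` and `ν ⊆ V(F)` has `e(F[ν]) ≥ 1`,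
then `f(ν) ≥ e(F[ν])`. -/
theorem stmt3 {V : Type*} [Fintype V] [DecidableEq V] (F : SimpleGraph V) [DecidableRel F.Adj]
    (S T : Finset V) (vstar : V) (r : ℕ)
    (hUnion : S ∪ T = Finset.univ) (hDisj : Disjoint S T)
    (hBip : ∀ u v, F.Adj u v → (u ∈ S ∧ v ∈ T) ∨ (u ∈ T ∧ v ∈ S))
    (hv : vstar ∈ T) (hComp : ∀ u ∈ S, F.Adj vstar u)
    (hDeg : ∀ v ∈ T, v ≠ vstar → F.degree v ≤ r)
    (ν : Finset V) (hν : 1 ≤ eInd F ν) :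
    (eInd F ν : ℤ) ≤ fI F S T ν :=
  stmt3_general F S T hDisj hBip ν
end

section
/- Let F be r-semi-bounded with respect to (S, T, v*) and let ν ⊆ V(F) with e(F[ν]) ≥ 1 and S ∪ {v*} ⊆ ν. Then f(ν) = e(F[ν]). -/
open Finset

/-!
Every edge of `F` has exactly one end in `T`, and when `S ⊆ ν` its other end automatically lies
in `ν`. Hence the edges of `F[ν]` are partitioned by their ends in `T ∩ ν`, giving
`e(F[ν]) = Σ_{v ∈ T ∩ ν} deg_F(v)`. The degree of a vertex of `T` is at most `|S|`, with equality
for `v*`, and `v*` has a neighbour in `ν` because `S` is non-empty (`F[ν]` has an edge), so the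
maximum in `f(ν)` is `|S| = |S ∩ ν|` and cancels the first term.
-/

namespace SimpleGraph.IsBipartiteWith

variable {V : Type*} {F : SimpleGraph V} {S T : Finset V}

theorem filter_edgeFinset_eq_biUnion_incidenceFinset [Fintype V] [DecidableEq V]
    [DecidableRel F.Adj] (h : F.IsBipartiteWith S T) {ν : Finset V} (hS : S ⊆ ν) :
    F.edgeFinset.filter (fun e => ∀ v ∈ e, v ∈ ν) =
      (T ∩ ν).biUnion fun v => F.incidenceFinset v := by
  ext e
  induction e using Sym2.ind with
  | _ a b =>
    simp only [mem_filter, mem_biUnion, mem_inter, mem_incidenceFinset,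
      mk'_mem_incidenceSet_iff, mem_edgeFinset, mem_edgeSet, Sym2.mem_iff, forall_eq_or_imp,
      forall_eq]
    constructor
    · rintro ⟨hab, ha, hb⟩
      rcases h.mem_of_adj hab with ⟨-, hbT⟩ | ⟨haT, -⟩
      · exact ⟨b, ⟨hbT, hb⟩, hab, Or.inr rfl⟩
      · exact ⟨a, ⟨haT, ha⟩, hab, Or.inl rfl⟩
    · rintro ⟨v, ⟨hvT, hv⟩, hab, rfl | rfl⟩
      · exact ⟨hab, hv, hS (h.mem_of_mem_adj' hvT hab.symm)⟩
      · exact ⟨hab, hS (h.mem_of_mem_adj' hvT hab), hv⟩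

theorem eInd_eq_sum_degree [Fintype V] [DecidableEq V] [DecidableRel F.Adj]
    (h : F.IsBipartiteWith S T) {ν : Finset V} (hS : S ⊆ ν) :
    eInd F ν = ∑ v ∈ T ∩ ν, F.degree v := by
  rw [eInd, h.filter_edgeFinset_eq_biUnion_incidenceFinset hS, card_biUnion]
  · simp only [card_incidenceFinset_eq_degree]
  · intro x hx y hy hxy
    rw [Function.onFun, Finset.disjoint_left]
    intro e hex hey
    have hxS : x ∈ S := h.mem_of_mem_adj' (mem_of_mem_inter_left hy)
      (F.adj_of_mem_incidenceSet hxy ((F.mem_incidenceFinset _ _).mp hex)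
        ((F.mem_incidenceFinset _ _).mp hey))
    exact Finset.disjoint_left.mp (disjoint_coe.mp h.disjoint) hxS (mem_of_mem_inter_left hx)

theorem degree_eq_card_of_forall_adj [Fintype V] [DecidableRel F.Adj]
    (h : F.IsBipartiteWith S T) {v : V} (hv : v ∈ T)
    (hadj : ∀ u ∈ S, F.Adj v u) : F.degree v = #S := by
  rw [← card_neighborFinset_eq_degree, isBipartiteWith_neighborFinset' h hv,
    filter_true_of_mem fun u hu => (hadj u hu).symm]

theorem sup_degree_eq_card [Fintype V] [DecidableRel F.Adj] (h : F.IsBipartiteWith S T)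
    {A : Finset V} (hA : A ⊆ T) {v : V} (hvA : v ∈ A) (hadj : ∀ u ∈ S, F.Adj v u) :
    A.sup (fun w => F.degree w) = #S := by
  have hv : F.degree v = #S := h.degree_eq_card_of_forall_adj (hA hvA) hadj
  rw [← hv]
  refine sup_eq_of_isMaxOn hvA fun w hw => ?_
  rw [Set.mem_ofPred_eq, hv]
  exact isBipartiteWith_degree_le' h (hA hw)

theorem nonempty_left_of_mem_edgeSet (h : F.IsBipartiteWith S T) {e : Sym2 V}
    (he : e ∈ F.edgeSet) : S.Nonempty := by
  induction e using Sym2.ind with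
  | _ a b =>
    rcases h.mem_of_adj he with ⟨haS, -⟩ | ⟨-, hbS⟩
    exacts [⟨a, haS⟩, ⟨b, hbS⟩]

end SimpleGraph.IsBipartiteWith

open SimpleGraph in
theorem stmt4_general {V : Type*} [Fintype V] [DecidableEq V] (F : SimpleGraph V) [DecidableRel F.Adj]
    (S T : Finset V) (vstar : V)
    (hDisj : Disjoint S T)
    (hBip : ∀ u v, F.Adj u v → (u ∈ S ∧ v ∈ T) ∨ (u ∈ T ∧ v ∈ S))
    (hv : vstar ∈ T) (hComp : ∀ u ∈ S, F.Adj vstar u)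
    (ν : Finset V) (hν : 1 ≤ eInd F ν) (hSub : insert vstar S ⊆ ν) :
    fI F S T ν = (eInd F ν : ℤ) := by
  have hF : F.IsBipartiteWith S T := ⟨disjoint_coe.mpr hDisj, hBip⟩
  obtain ⟨hvν, hSν⟩ := insert_subset_iff.mp hSub
  obtain ⟨e, he⟩ := card_pos.mp hν
  obtain ⟨s, hs⟩ := hF.nonempty_left_of_mem_edgeSet (mem_edgeFinset.mp (mem_filter.mp he).1)
  have hmax : ((T ∩ ν).filter (fun v => ∃ u ∈ ν, F.Adj v u)).sup (fun v => F.degree v) = #S :=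
    hF.sup_degree_eq_card (fun _ hw => mem_of_mem_inter_left (mem_filter.mp hw).1)
      (mem_filter.mpr ⟨mem_inter.mpr ⟨hv, hvν⟩, s, hSν hs, hComp s hs⟩) hComp
  rw [fI, hmax, inter_eq_left.mpr hSν, hF.eInd_eq_sum_degree hSν]
  push_cast
  ring

/-- If `F` is `r`-semi-bounded with respect to `(S, T, v*)`, `ν ⊆ V(F)` has `e(F[ν]) ≥ 1`,
and `S ∪ {v*} ⊆ ν`, then `f(ν) = e(F[ν])`. -/
theorem stmt4 {V : Type*} [Fintype V] [DecidableEq V] (F : SimpleGraph V) [DecidableRel F.Adj]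
    (S T : Finset V) (vstar : V) (r : ℕ)
    (hUnion : S ∪ T = Finset.univ) (hDisj : Disjoint S T)
    (hBip : ∀ u v, F.Adj u v → (u ∈ S ∧ v ∈ T) ∨ (u ∈ T ∧ v ∈ S))
    (hv : vstar ∈ T) (hComp : ∀ u ∈ S, F.Adj vstar u)
    (hDeg : ∀ v ∈ T, v ≠ vstar → F.degree v ≤ r)
    (ν : Finset V) (hν : 1 ≤ eInd F ν) (hSub : insert vstar S ⊆ ν) :
    fI F S T ν = (eInd F ν : ℤ) :=
  stmt4_general F S T vstar hDisj hBip hv hComp ν hν hSub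
end

section
/- Let F be r-semi-bounded with respect to (S, T, v*) and let ν ⊆ V(F) with e(F[ν]) ≥ 1. If there exists a vertex in (T ∩ ν) \ {v*} that is not incident to every edge of F[ν], then there exists v ∈ (T ∩ ν) \ {v*} with e(F[ν \ {v}]) ≥ 1 and f(ν) − f(ν \ {v}) = deg_F(v). -/
/-! Let `Q = activeT F T ν` be the set of vertices of `T ∩ ν` with a neighbour in `ν`. Since `T`
is independent, deleting a vertex `v ∈ T` from `ν` leaves `S ∩ ν` alone, removes `deg v` from the
sum, and turns `Q` into `Q \ {v}`; so `f` drops by exactly `deg v` as soon as the maximum degree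
over `Q` survives the deletion. Take the given vertex `w` and an edge `ts` of `F[ν]` avoiding it,
`t ∈ T`. Deleting `w` works unless `w` is the unique vertex of maximum degree in `Q`; then deleting
`t` works instead, and `t ≠ v*` because `deg t < deg w ≤ deg v*`, the neighbourhood of `v*` being
all of `S`. -/

open Finset

lemma Finset.sup_erase_eq_of_le {α β : Type*} [DecidableEq α] [SemilatticeSup β] [OrderBot β]
    {s : Finset α} {g : α → β} {v m : α} (hm : m ∈ s.erase v) (hvm : g v ≤ g m) :
    (s.erase v).sup g = s.sup g := by
  refine le_antisymm (sup_mono (erase_subset _ _)) (Finset.sup_le fun u hu => ?_)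
  by_cases huv : u = v
  · exact (huv ▸ hvm).trans (le_sup hm)
  · exact le_sup (mem_erase.2 ⟨huv, hu⟩)

lemma Finset.sup_erase_eq_or {α β : Type*} [DecidableEq α] [LinearOrder β] [OrderBot β]
    {s : Finset α} (g : α → β) {w t : α} (ht : t ∈ s) (htw : t ≠ w) :
    (s.erase w).sup g = s.sup g ∨ (w ∈ s ∧ g t < g w ∧ (s.erase t).sup g = s.sup g) := by
  by_cases hws : w ∈ s
  · by_cases hm : ∃ m ∈ s.erase w, g w ≤ g m
    · obtain ⟨m, hm, hwm⟩ := hm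
      exact Or.inl (sup_erase_eq_of_le hm hwm)
    · push Not at hm
      have hlt := hm t (mem_erase.2 ⟨htw, ht⟩)
      exact Or.inr ⟨hws, hlt, sup_erase_eq_of_le (mem_erase.2 ⟨htw.symm, hws⟩) hlt.le⟩
  · exact Or.inl (by rw [erase_eq_of_notMem hws])

lemma SimpleGraph.degree_le_degree_of_forall_adj {V : Type*} (G : SimpleGraph V) {x y : V}
    [Fintype (G.neighborSet x)] [Fintype (G.neighborSet y)] (h : ∀ u, G.Adj x u → G.Adj y u) :
    G.degree x ≤ G.degree y :=
  card_le_card fun u hu => by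
    rw [SimpleGraph.mem_neighborFinset] at hu ⊢
    exact h u hu

section Induced

variable {V : Type*} [Fintype V] [DecidableEq V] (F : SimpleGraph V) [DecidableRel F.Adj]

lemma one_le_eInd_of_adj {ν : Finset V} {x y : V} (hxy : F.Adj x y) (hx : x ∈ ν) (hy : y ∈ ν) :
    1 ≤ eInd F ν := by
  refine card_pos.2 ⟨s(x, y), mem_filter.2 ⟨F.mem_edgeFinset.2 hxy, fun z hz => ?_⟩⟩
  rcases Sym2.mem_iff.1 hz with rfl | rfl <;> assumption

lemma one_le_eInd_erase_of_adj {S T ν : Finset V} (hDisj : Disjoint S T)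
    (hTS : ∀ x ∈ T, ∀ u, F.Adj x u → u ∈ S) {v x u : V} (hv : v ∈ T) (hx : x ∈ T) (hxv : x ≠ v)
    (hxu : F.Adj x u) (hxν : x ∈ ν) (huν : u ∈ ν) :
    1 ≤ eInd F (ν.erase v) :=
  one_le_eInd_of_adj F hxu (mem_erase.2 ⟨hxv, hxν⟩)
    (mem_erase.2 ⟨fun huv => disjoint_left.1 hDisj (hTS x hx u hxu) (huv ▸ hv), huν⟩)

def activeT (T ν : Finset V) : Finset V :=
  (T ∩ ν).filter (fun v => ∃ u ∈ ν, F.Adj v u)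

lemma activeT_erase {S T : Finset V} (hDisj : Disjoint S T)
    (hTS : ∀ x ∈ T, ∀ u, F.Adj x u → u ∈ S) (ν : Finset V) {v : V} (hv : v ∈ T) :
    activeT F T (ν.erase v) = (activeT F T ν).erase v := by
  ext x
  simp only [activeT, mem_filter, mem_inter, mem_erase]
  constructor
  · rintro ⟨⟨hxT, hxv, hxν⟩, u, ⟨-, huν⟩, hxu⟩
    exact ⟨hxv, ⟨hxT, hxν⟩, u, huν, hxu⟩
  · rintro ⟨hxv, ⟨hxT, hxν⟩, u, huν, hxu⟩
    have huv : u ≠ v := fun huv => disjoint_left.1 hDisj (hTS x hxT u hxu) (huv ▸ hv)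
    exact ⟨⟨hxT, hxv, hxν⟩, u, ⟨huv, huν⟩, hxu⟩

lemma fI_sub_fI_erase {S T ν : Finset V} (hDisj : Disjoint S T)
    (hTS : ∀ x ∈ T, ∀ u, F.Adj x u → u ∈ S) {v : V} (hv : v ∈ T ∩ ν)
    (hsup : ((activeT F T ν).erase v).sup (fun x => F.degree x) =
      (activeT F T ν).sup (fun x => F.degree x)) :
    fI F S T ν - fI F S T (ν.erase v) = (F.degree v : ℤ) := by
  obtain ⟨hvT, hvν⟩ := mem_inter.1 hv
  have hS : S ∩ ν.erase v = S ∩ ν := by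
    ext x
    simp only [mem_inter, mem_erase]
    exact ⟨fun h => ⟨h.1, h.2.2⟩,
      fun h => ⟨h.1, fun hxv => disjoint_left.1 hDisj h.1 (hxv ▸ hvT), h.2⟩⟩
  have hT : T ∩ ν.erase v = (T ∩ ν).erase v := by
    ext x
    simp only [mem_inter, mem_erase]
    tauto
  have hsum := sum_erase_add (T ∩ ν) (fun x => (F.degree x : ℤ)) hv
  rw [← activeT_erase F hDisj hTS ν hvT] at hsup
  unfold activeT at hsup
  rw [fI, fI, hsup, hS, hT, ← hsum]
  ring

end Induced

theorem stmt9_general {V : Type*} [Fintype V] [DecidableEq V] (F : SimpleGraph V) [DecidableRel F.Adj]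
    (S T : Finset V) (vstar : V)
    (hDisj : Disjoint S T)
    (hBip : ∀ u v, F.Adj u v → (u ∈ S ∧ v ∈ T) ∨ (u ∈ T ∧ v ∈ S))
    (hComp : ∀ u ∈ S, F.Adj vstar u)
    (ν : Finset V)
    (hex : ∃ w ∈ T ∩ ν, w ≠ vstar ∧ ∃ a ∈ ν, ∃ b ∈ ν, F.Adj a b ∧ w ≠ a ∧ w ≠ b) :
    ∃ v ∈ T ∩ ν, v ≠ vstar ∧ 1 ≤ eInd F (ν.erase v) ∧
      fI F S T ν - fI F S T (ν.erase v) = (F.degree v : ℤ) := by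
  obtain ⟨w, hwTν, hwvstar, a, ha, b, hb, hab, hwa, hwb⟩ := hex
  obtain ⟨hwT, hwν⟩ := mem_inter.1 hwTν
  have hTS : ∀ x ∈ T, ∀ u, F.Adj x u → u ∈ S := fun x hx u hxu =>
    (hBip x u hxu).elim (fun h => absurd hx (disjoint_left.1 hDisj h.1)) (·.2)
  obtain ⟨t, s, htT, hts, htν, hsν, htw⟩ :
      ∃ t s, t ∈ T ∧ F.Adj t s ∧ t ∈ ν ∧ s ∈ ν ∧ t ≠ w := by
    rcases hBip a b hab with ⟨-, hbT⟩ | ⟨haT, -⟩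
    · exact ⟨b, a, hbT, hab.symm, hb, ha, hwb.symm⟩
    · exact ⟨a, b, haT, hab, ha, hb, hwa.symm⟩
  have htTν : t ∈ T ∩ ν := mem_inter.2 ⟨htT, htν⟩
  have htQ : t ∈ activeT F T ν := mem_filter.2 ⟨htTν, s, hsν, hts⟩
  rcases sup_erase_eq_or (fun x => F.degree x) htQ htw with hsup | ⟨hwQ, hlt, hsup⟩
  · exact ⟨w, hwTν, hwvstar, one_le_eInd_erase_of_adj F hDisj hTS hwT htT htw hts htν hsν,
      fI_sub_fI_erase F hDisj hTS hwTν hsup⟩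
  · obtain ⟨-, s', hs'ν, hws'⟩ := mem_filter.1 hwQ
    have htvstar : t ≠ vstar := by
      rintro rfl
      exact hlt.not_ge (F.degree_le_degree_of_forall_adj fun u hu => hComp u (hTS w hwT u hu))
    exact ⟨t, htTν, htvstar, one_le_eInd_erase_of_adj F hDisj hTS htT hwT htw.symm hws' hwν hs'ν,
      fI_sub_fI_erase F hDisj hTS htTν hsup⟩

/-- If `F` is `r`-semi-bounded with respect to `(S, T, v*)`, `ν ⊆ V(F)` has `e(F[ν]) ≥ 1`,
and some vertex of `(T ∩ ν) \ {v*}` is not incident to every edge of `F[ν]`, then there is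
`v ∈ (T ∩ ν) \ {v*}` with `e(F[ν \ {v}]) ≥ 1` and `f(ν) - f(ν \ {v}) = deg_F(v)`. -/
theorem stmt9 {V : Type*} [Fintype V] [DecidableEq V] (F : SimpleGraph V) [DecidableRel F.Adj]
    (S T : Finset V) (vstar : V) (r : ℕ)
    (hUnion : S ∪ T = Finset.univ) (hDisj : Disjoint S T)
    (hBip : ∀ u v, F.Adj u v → (u ∈ S ∧ v ∈ T) ∨ (u ∈ T ∧ v ∈ S))
    (hv : vstar ∈ T) (hComp : ∀ u ∈ S, F.Adj vstar u)
    (hDeg : ∀ v ∈ T, v ≠ vstar → F.degree v ≤ r)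
    (ν : Finset V) (hν : 1 ≤ eInd F ν)
    (hex : ∃ w ∈ T ∩ ν, w ≠ vstar ∧ ∃ a ∈ ν, ∃ b ∈ ν, F.Adj a b ∧ w ≠ a ∧ w ≠ b) :
    ∃ v ∈ T ∩ ν, v ≠ vstar ∧ 1 ≤ eInd F (ν.erase v) ∧
      fI F S T ν - fI F S T (ν.erase v) = (F.degree v : ℤ) :=
  stmt9_general F S T vstar hDisj hBip hComp ν hex
end

section
/- Let F be r-semi-bounded with respect to (S, T, v*) and suppose F contains a cycle. Then the set ν = S ∪ {v*} satisfies f(ν) − 1 < r(e(F[ν]) − 1), i.e., ν ∈ A_F, and moreover a(ν) = (r(|ν|−2)+1−f(ν))/(r(e(F[ν])−1)+1−f(ν)) = 1; consequently A_F ≠ ∅ and a(F) ≤ 1. -/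
/-!
Count the edges of a subgraph `ν` with `e(F[ν]) ≥ |ν|` from the `T` side: a vertex of `T ∩ ν`
contributes at most `|S ∩ ν|` edges, and at most `r` unless it is `v*`. Since `|ν| ≥ |S ∩ ν| + |T ∩ ν|`,
this forces `r ≥ 2` and `|S| ≥ 2`. On `S ∪ {v*}` both `f` and `e` equal `|S|`, so the inequality
and `a = 1` reduce to `(r - 1)(|S| - 1) > 0`.
-/

open Finset

theorem two_le_and_two_le_of_add_card_le_sum {ι : Type*} [DecidableEq ι] {A : Finset ι}
    {i₀ : ι} {c : ι → ℕ} {s r : ℕ} (hs : ∀ i ∈ A, c i ≤ s) (hr : ∀ i ∈ A, i ≠ i₀ → c i ≤ r)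
    (hpos : 0 < ∑ i ∈ A, c i) (hsum : s + #A ≤ ∑ i ∈ A, c i) : 2 ≤ r ∧ 2 ≤ s := by
  have hA : 0 < #A := card_pos.2 (nonempty_of_sum_ne_zero hpos.ne')
  have hle_mul : s + #A ≤ #A * s := hsum.trans (by simpa using sum_le_card_nsmul A c s hs)
  have hs2 : 2 ≤ s := by nlinarith
  refine ⟨?_, hs2⟩
  by_contra! hr1
  -- with `r ≤ 1`, only `i₀` can contribute more than one to the sum
  have hbound : ∑ i ∈ A, c i ≤ #A + (s - 1) :=
    calc ∑ i ∈ A, c i ≤ ∑ i ∈ A, (1 + if i = i₀ then s - 1 else 0) := by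
          refine sum_le_sum fun i hi => ?_
          split_ifs with h
          · have := hs i hi; omega
          · have := hr i hi h; omega
      _ ≤ #A + (s - 1) := by
          rw [sum_add_distrib, sum_ite_eq', card_eq_sum_ones]
          split_ifs <;> omega
  omega

theorem Finset.inter_insert_eq_singleton {α : Type*} [DecidableEq α] {S T : Finset α} {a : α}
    (hDisj : Disjoint S T) (ha : a ∈ T) : T ∩ insert a S = {a} := by
  rw [inter_insert_of_mem ha, disjoint_iff_inter_eq_empty.1 hDisj.symm, insert_empty]

section SemiBounded

variable {V : Type*} [Fintype V] {F : SimpleGraph V} [DecidableRel F.Adj] {S T : Finset V}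

theorem eInd_le_sum_card_neighborFinset_inter [DecidableEq V]
    (hT : ∀ u v, F.Adj u v → u ∈ T ∨ v ∈ T) (ν : Finset V) :
    eInd F ν ≤ ∑ v ∈ T ∩ ν, #(F.neighborFinset v ∩ ν) := by
  calc eInd F ν
      ≤ #((T ∩ ν).biUnion fun v => (F.neighborFinset v ∩ ν).image fun u => s(v, u)) := by
        refine card_le_card fun e he => ?_
        simp only [mem_filter, SimpleGraph.mem_edgeFinset] at he
        induction e with
        | _ a b =>
          obtain ⟨hab, hmem⟩ := he
          have ha := hmem a (Sym2.mem_mk_left a b)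
          have hb := hmem b (Sym2.mem_mk_right a b)
          simp only [mem_biUnion, mem_inter, mem_image, SimpleGraph.mem_neighborFinset]
          rcases hT a b hab with haT | hbT
          · exact ⟨a, ⟨haT, ha⟩, b, ⟨hab, hb⟩, rfl⟩
          · exact ⟨b, ⟨hbT, hb⟩, a, ⟨hab.symm, ha⟩, Sym2.eq_swap⟩
    _ ≤ ∑ v ∈ T ∩ ν, #((F.neighborFinset v ∩ ν).image fun u => s(v, u)) := card_biUnion_le
    _ ≤ ∑ v ∈ T ∩ ν, #(F.neighborFinset v ∩ ν) := sum_le_sum fun _ _ => card_image_le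

theorem neighborFinset_subset_of_mem_right (hDisj : Disjoint S T)
    (hBip : ∀ u v, F.Adj u v → (u ∈ S ∧ v ∈ T) ∨ (u ∈ T ∧ v ∈ S)) {v : V} (hvT : v ∈ T) :
    F.neighborFinset v ⊆ S := by
  intro u hu
  rw [SimpleGraph.mem_neighborFinset] at hu
  rcases hBip v u hu with ⟨hvS, _⟩ | ⟨_, huS⟩
  · exact absurd hvT (disjoint_left.1 hDisj hvS)
  · exact huS

theorem two_le_and_two_le_card_of_card_le_eInd [DecidableEq V] {vstar : V} {r : ℕ}
    (hDisj : Disjoint S T) (hBip : ∀ u v, F.Adj u v → (u ∈ S ∧ v ∈ T) ∨ (u ∈ T ∧ v ∈ S))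
    (hDeg : ∀ v ∈ T, v ≠ vstar → F.degree v ≤ r)
    {ν : Finset V} (hν : ν.Nonempty) (hle : #ν ≤ eInd F ν) : 2 ≤ r ∧ 2 ≤ #S := by
  have hT : ∀ u v, F.Adj u v → u ∈ T ∨ v ∈ T := fun u v huv => by
    rcases hBip u v huv with h | h <;> simp [h]
  have hsum := hle.trans (eInd_le_sum_card_neighborFinset_inter hT ν)
  have hcard : #(S ∩ ν) + #(T ∩ ν) ≤ #ν := by
    rw [← card_union_of_disjoint (hDisj.mono inter_subset_left inter_subset_left)]
    exact card_le_card (union_subset inter_subset_right inter_subset_right)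
  have hnbr : ∀ v ∈ T ∩ ν, F.neighborFinset v ∩ ν ⊆ S ∩ ν := fun v hv =>
    inter_subset_inter_right (neighborFinset_subset_of_mem_right hDisj hBip (mem_inter.1 hv).1)
  obtain ⟨hr, hs⟩ := two_le_and_two_le_of_add_card_le_sum (i₀ := vstar)
    (fun v hv => card_le_card (hnbr v hv))
    (fun v hv hne => (card_le_card inter_subset_left).trans
      ((F.card_neighborFinset_eq_degree v).trans_le (hDeg v (mem_inter.1 hv).1 hne)))
    ((card_pos.2 hν).trans_le hsum) (hcard.trans hsum)
  exact ⟨hr, hs.trans (card_le_card inter_subset_left)⟩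

theorem fI_insert_eq_card [DecidableEq V] {vstar : V} (hDisj : Disjoint S T) (hv : vstar ∈ T)
    (hComp : ∀ u ∈ S, F.Adj vstar u) (hS : S.Nonempty) : fI F S T (insert vstar S) = #S := by
  obtain ⟨u, hu⟩ := hS
  have hactive : ({vstar} : Finset V).filter (fun v => ∃ u ∈ insert vstar S, F.Adj v u)
      = {vstar} := by
    rw [filter_singleton, if_pos ⟨u, mem_insert_of_mem hu, hComp u hu⟩]
  rw [fI, inter_eq_left.2 (subset_insert _ _), inter_insert_eq_singleton hDisj hv, hactive,
    sum_singleton, sup_singleton]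
  ring

theorem eInd_insert_eq_card [DecidableEq V] {vstar : V} (hDisj : Disjoint S T)
    (hBip : ∀ u v, F.Adj u v → (u ∈ S ∧ v ∈ T) ∨ (u ∈ T ∧ v ∈ S)) (hv : vstar ∈ T)
    (hComp : ∀ u ∈ S, F.Adj vstar u) : eInd F (insert vstar S) = #S := by
  have hT : ∀ u v, F.Adj u v → u ∈ T ∨ v ∈ T := fun u v huv => by
    rcases hBip u v huv with h | h <;> simp [h]
  apply le_antisymm
  · calc eInd F (insert vstar S)
        ≤ ∑ v ∈ T ∩ insert vstar S, #(F.neighborFinset v ∩ insert vstar S) :=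
          eInd_le_sum_card_neighborFinset_inter hT _
      _ ≤ #S := by
          rw [inter_insert_eq_singleton hDisj hv, sum_singleton]
          exact card_le_card fun u hu =>
            (inter_subset_left.trans (neighborFinset_subset_of_mem_right hDisj hBip hv)) hu
  · calc #S = #(S.image fun u => s(vstar, u)) :=
          (card_image_of_injective _ fun _ _ => Sym2.congr_right.1).symm
      _ ≤ eInd F (insert vstar S) := by
          refine card_le_card fun e he => ?_
          obtain ⟨u, hu, rfl⟩ := mem_image.1 he
          simp only [mem_filter, SimpleGraph.mem_edgeFinset, SimpleGraph.mem_edgeSet,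
            Sym2.mem_iff, forall_eq_or_imp, forall_eq]
          exact ⟨hComp u hu, mem_insert_self _ _, mem_insert_of_mem hu⟩

end SemiBounded

theorem stmt10_general {V : Type*} [Fintype V] [DecidableEq V] (F : SimpleGraph V) [DecidableRel F.Adj]
    (S T : Finset V) (vstar : V) (r : ℕ)
    (hDisj : Disjoint S T)
    (hBip : ∀ u v, F.Adj u v → (u ∈ S ∧ v ∈ T) ∨ (u ∈ T ∧ v ∈ S))
    (hv : vstar ∈ T) (hComp : ∀ u ∈ S, F.Adj vstar u)
    (hDeg : ∀ v ∈ T, v ≠ vstar → F.degree v ≤ r)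
    (hcycle : ∃ ν : Finset V, ν.Nonempty ∧ ν.card ≤ eInd F ν) :
    (∀ w ∈ insert vstar S, ∃ u ∈ insert vstar S, F.Adj w u) ∧
    fI F S T (insert vstar S) - 1 < (r : ℤ) * ((eInd F (insert vstar S) : ℤ) - 1) ∧
    ((r : ℚ) * (((insert vstar S).card : ℚ) - 2) + 1 - (fI F S T (insert vstar S) : ℚ)) /
        ((r : ℚ) * ((eInd F (insert vstar S) : ℚ) - 1) + 1 - (fI F S T (insert vstar S) : ℚ))
      = 1 := by
  obtain ⟨ν, hν, hle⟩ := hcycle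
  obtain ⟨hr, hS⟩ := two_le_and_two_le_card_of_card_le_eInd hDisj hBip hDeg hν hle
  obtain ⟨u, hu⟩ : S.Nonempty := card_pos.1 (by omega)
  have hvS : vstar ∉ S := fun h => disjoint_left.1 hDisj h hv
  rw [fI_insert_eq_card hDisj hv hComp ⟨u, hu⟩, eInd_insert_eq_card hDisj hBip hv hComp,
    card_insert_of_notMem hvS]
  refine ⟨?_, ?_, ?_⟩
  · intro w hw
    rcases mem_insert.1 hw with rfl | hwS
    · exact ⟨u, mem_insert_of_mem hu, hComp u hu⟩
    · exact ⟨vstar, mem_insert_self _ _, (hComp w hwS).symm⟩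
  · have hr' : (2 : ℤ) ≤ r := by exact_mod_cast hr
    have hS' : (2 : ℤ) ≤ #S := by exact_mod_cast hS
    nlinarith
  · -- numerator and denominator both equal `(r - 1)(|S| - 1) > 0`
    have hr' : (2 : ℚ) ≤ r := by exact_mod_cast hr
    have hS' : (2 : ℚ) ≤ #S := by exact_mod_cast hS
    push_cast
    rw [div_eq_one_iff_eq (by nlinarith)]
    ring

/-- If `F` is `r`-semi-bounded with respect to `(S, T, v*)` and contains a cycle, then
`ν = S ∪ {v*}` lies in `A_F` (it has minimum induced degree at least 1 and
`f(ν) - 1 < r(e(F[ν]) - 1)`) and satisfies `a(ν) = 1`; in particular `A_F ≠ ∅` and `a(F) ≤ 1`. -/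
theorem stmt10 {V : Type*} [Fintype V] [DecidableEq V] (F : SimpleGraph V) [DecidableRel F.Adj]
    (S T : Finset V) (vstar : V) (r : ℕ)
    (hUnion : S ∪ T = Finset.univ) (hDisj : Disjoint S T)
    (hBip : ∀ u v, F.Adj u v → (u ∈ S ∧ v ∈ T) ∨ (u ∈ T ∧ v ∈ S))
    (hv : vstar ∈ T) (hComp : ∀ u ∈ S, F.Adj vstar u)
    (hDeg : ∀ v ∈ T, v ≠ vstar → F.degree v ≤ r)
    (hcycle : ∃ ν : Finset V, ν.Nonempty ∧ ν.card ≤ eInd F ν) :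
    (∀ w ∈ insert vstar S, ∃ u ∈ insert vstar S, F.Adj w u) ∧
    fI F S T (insert vstar S) - 1 < (r : ℤ) * ((eInd F (insert vstar S) : ℤ) - 1) ∧
    ((r : ℚ) * (((insert vstar S).card : ℚ) - 2) + 1 - (fI F S T (insert vstar S) : ℚ)) /
        ((r : ℚ) * ((eInd F (insert vstar S) : ℚ) - 1) + 1 - (fI F S T (insert vstar S) : ℚ))
      = 1 :=
  stmt10_general F S T vstar r hDisj hBip hv hComp hDeg hcycle
end

section
/- Let F be r-semi-bounded with respect to (S, T, v*) in which every vertex of S has degree at most Δ in F, and suppose F contains a cycle. Then every ν ∈ A_F satisfies a(ν) ≥ (r−1)/(rΔ−1); consequently a(F) ≥ (r−1)/(rΔ−1). -/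
open Finset

/-
Write `s = |S ∩ ν|`, `t = |T ∩ ν|`, `e = e(F[ν])`, `f = f(ν)`. Since every vertex of `ν` has a
neighbour in `ν`, the maximum in `f(ν)` runs over all of `T ∩ ν`; as every vertex of `T` other
than `v*` has degree at most `r`, this gives `f ≤ s + (t - 1) r`. Counting the edges of `F[ν]`
from the `S` side, one vertex of `S ∩ ν` sends at most `t` edges into `ν` and the others at most
`Δ`, so `e ≤ (s - 1) Δ + t`. Clearing denominators, the claim becomes
`(rΔ - 1)(r(s + t - 2) + 1 - f) - (r - 1)(r(e - 1) + 1 - f)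
  = r(Δ - 1)(s + (t - 1) r - f) + r(r - 1)((s - 1) Δ + t - e) ≥ 0`.
-/

theorem sub_one_div_le_of_counts {r Δ : ℕ} {s t e f : ℚ} (hr : 1 ≤ r) (hs : 1 ≤ s)
    (hf : f ≤ s + (t - 1) * r) (he : e ≤ (s - 1) * Δ + t) (hden : f ≤ r * (e - 1)) :
    ((r : ℚ) - 1) / (r * Δ - 1) ≤ (r * (s + t - 2) + 1 - f) / (r * (e - 1) + 1 - f) := by
  have hr' : (1 : ℚ) ≤ r := by exact_mod_cast hr
  have hden' : 0 < (r : ℚ) * (e - 1) + 1 - f := by linarith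
  rcases le_or_gt (r * Δ) 1 with hrΔ | hrΔ
  -- here the left side is `≤ 0`, for `rΔ = 1` because `x / 0 = 0`
  · have hrΔ' : (r : ℚ) * Δ ≤ 1 := by exact_mod_cast hrΔ
    have hnum : 0 ≤ (r : ℚ) * (s + t - 2) + 1 - f := by
      linarith [mul_nonneg (sub_nonneg.mpr hr') (sub_nonneg.mpr hs)]
    exact (div_nonpos_of_nonneg_of_nonpos (by linarith) (by linarith)).trans
      (div_nonneg hnum hden'.le)
  · have hΔ : (1 : ℚ) ≤ Δ := by
      exact_mod_cast Nat.pos_of_ne_zero fun h => by simp [h] at hrΔ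
    have hrΔ' : (1 : ℚ) < r * Δ := by exact_mod_cast hrΔ
    rw [div_le_div_iff₀ (by linarith) hden']
    have hgap_f := mul_nonneg (mul_nonneg (by linarith : (0 : ℚ) ≤ r) (sub_nonneg.mpr hΔ))
      (sub_nonneg.mpr hf)
    have hgap_e := mul_nonneg (mul_nonneg (by linarith : (0 : ℚ) ≤ r) (sub_nonneg.mpr hr'))
      (sub_nonneg.mpr he)
    linarith

theorem Finset.sum_le_add_card_sub_one_mul {ι : Type*} [DecidableEq ι] {s : Finset ι} {g : ι → ℕ}
    {w : ι} {r : ℕ} (hw : w ∈ s) (h : ∀ v ∈ s, v ≠ w → g v ≤ r) :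
    ∑ v ∈ s, g v ≤ g w + (#s - 1) * r := by
  rw [← add_sum_erase s g hw, ← card_erase_of_mem hw, ← smul_eq_mul]
  gcongr
  exact sum_le_card_nsmul _ _ _ fun v hv => h v (mem_of_mem_erase hv) (ne_of_mem_erase hv)

theorem Finset.card_eq_card_inter_add_card_inter {α : Type*} [DecidableEq α] {S T ν : Finset α}
    (hν : ν ⊆ S ∪ T) (hST : Disjoint S T) : #ν = #(S ∩ ν) + #(T ∩ ν) := by
  rw [← card_union_of_disjoint (hST.mono inter_subset_left inter_subset_left),
    ← union_inter_distrib_right, inter_eq_right.mpr hν]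

theorem card_filter_adj_le_card_inter {V : Type*} [DecidableEq V] {F : SimpleGraph V}
    [DecidableRel F.Adj] {S T ν : Finset V}
    (hBip : ∀ u v, F.Adj u v → (u ∈ S ∧ v ∈ T) ∨ (u ∈ T ∧ v ∈ S))
    (hDisj : Disjoint S T) {u : V} (hu : u ∈ S) : #(ν.filter (F.Adj u)) ≤ #(T ∩ ν) := by
  refine card_le_card fun w hw => ?_
  obtain ⟨hwν, huw⟩ := mem_filter.mp hw
  rcases hBip u w huw with ⟨-, hwT⟩ | ⟨huT, -⟩
  · exact mem_inter.mpr ⟨hwT, hwν⟩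
  · exact absurd huT (disjoint_left.mp hDisj hu)

section SemiBounded

variable {V : Type*} [Fintype V] [DecidableEq V] {F : SimpleGraph V} [DecidableRel F.Adj]
  {S T ν : Finset V}

theorem eInd_le_sum_card_filter_adj (hS : ∀ u v, F.Adj u v → u ∈ S ∨ v ∈ S) :
    eInd F ν ≤ ∑ u ∈ S ∩ ν, #(ν.filter (F.Adj u)) := by
  rw [eInd, ← card_sigma]
  refine card_le_card_of_surjOn (fun p => s(p.1, p.2)) ?_
  intro e he
  induction e using Sym2.ind with
  | _ a b =>
    simp only [coe_filter, Set.mem_ofPred_eq, SimpleGraph.mem_edgeFinset,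
      SimpleGraph.mem_edgeSet, Sym2.mem_iff, forall_eq_or_imp, forall_eq] at he
    obtain ⟨hab, ha, hb⟩ := he
    rcases hS a b hab with haS | hbS
    · exact ⟨⟨a, b⟩, by simp [ha, hb, haS, hab], rfl⟩
    · exact ⟨⟨b, a⟩, by simp [ha, hb, hbS, hab.symm], Sym2.eq_swap⟩

theorem eInd_le_of_isBipartite (hBip : ∀ u v, F.Adj u v → (u ∈ S ∧ v ∈ T) ∨ (u ∈ T ∧ v ∈ S))
    (hDisj : Disjoint S T) {Δ : ℕ} (hΔ : ∀ u ∈ S, F.degree u ≤ Δ) (hS : (S ∩ ν).Nonempty) :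
    eInd F ν ≤ (#(S ∩ ν) - 1) * Δ + #(T ∩ ν) := by
  obtain ⟨u₀, hu₀⟩ := hS
  have hdeg (u : V) (hu : u ∈ S ∩ ν) : #(ν.filter (F.Adj u)) ≤ Δ :=
    (card_le_card fun w hw => by simpa using (mem_filter.mp hw).2).trans
      (hΔ u (mem_inter.mp hu).1)
  calc eInd F ν ≤ ∑ u ∈ S ∩ ν, #(ν.filter (F.Adj u)) :=
        eInd_le_sum_card_filter_adj fun u v huv => (hBip u v huv).imp (·.1) (·.2)
    _ ≤ #(ν.filter (F.Adj u₀)) + (#(S ∩ ν) - 1) * Δ :=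
        sum_le_add_card_sub_one_mul hu₀ fun u hu _ => hdeg u hu
    _ ≤ (#(S ∩ ν) - 1) * Δ + #(T ∩ ν) := by
        rw [add_comm]
        gcongr _ + ?_
        exact card_filter_adj_le_card_inter hBip hDisj (mem_inter.mp hu₀).1

theorem fI_eq_of_forall_exists_adj (hmin : ∀ w ∈ ν, ∃ u ∈ ν, F.Adj w u) :
    fI F S T ν =
      #(S ∩ ν) + ∑ v ∈ T ∩ ν, (F.degree v : ℤ) - ((T ∩ ν).sup (fun v => F.degree v) : ℕ) := by
  rw [fI, filter_true_of_mem fun v hv => hmin v (mem_inter.mp hv).2]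

theorem fI_le_of_degree_le (hmin : ∀ w ∈ ν, ∃ u ∈ ν, F.Adj w u) {vstar : V} {r : ℕ}
    (hDeg : ∀ v ∈ T, v ≠ vstar → F.degree v ≤ r) (hT : (T ∩ ν).Nonempty) :
    fI F S T ν ≤ #(S ∩ ν) + ((#(T ∩ ν) : ℤ) - 1) * r := by
  obtain ⟨w, hw, hwstar⟩ : ∃ w ∈ T ∩ ν, ∀ v ∈ T ∩ ν, v ≠ w → v ≠ vstar := by
    by_cases hstar : vstar ∈ T ∩ ν
    · exact ⟨vstar, hstar, fun _ _ => id⟩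
    · obtain ⟨w, hw⟩ := hT
      exact ⟨w, hw, fun v hv _ hv' => hstar (hv' ▸ hv)⟩
  have hsum :
      ∑ v ∈ T ∩ ν, F.degree v ≤ (T ∩ ν).sup (fun v => F.degree v) + (#(T ∩ ν) - 1) * r := by
    refine (sum_le_add_card_sub_one_mul hw fun v hv hvw =>
      hDeg v (mem_inter.mp hv).1 (hwstar v hv hvw)).trans ?_
    gcongr
    exact le_sup (f := fun v => F.degree v) hw
  have ht : 1 ≤ #(T ∩ ν) := card_pos.mpr ⟨w, hw⟩
  rw [fI_eq_of_forall_exists_adj hmin]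
  zify [ht] at hsum
  linarith

end SemiBounded

theorem stmt12_general {V : Type*} [Fintype V] [DecidableEq V] (F : SimpleGraph V) [DecidableRel F.Adj]
    (S T : Finset V) (vstar : V) (r : ℕ)
    (hDisj : Disjoint S T)
    (hBip : ∀ u v, F.Adj u v → (u ∈ S ∧ v ∈ T) ∨ (u ∈ T ∧ v ∈ S))
    (hDeg : ∀ v ∈ T, v ≠ vstar → F.degree v ≤ r)
    (Δ : ℕ) (hΔ : ∀ u ∈ S, F.degree u ≤ Δ) :
    ∀ ν : Finset V, (∀ w ∈ ν, ∃ u ∈ ν, F.Adj w u) →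
      fI F S T ν - 1 < (r : ℤ) * ((eInd F ν : ℤ) - 1) →
      ((r : ℚ) - 1) / ((r : ℚ) * (Δ : ℚ) - 1) ≤
        ((r : ℚ) * ((ν.card : ℚ) - 2) + 1 - (fI F S T ν : ℚ)) /
          ((r : ℚ) * ((eInd F ν : ℚ) - 1) + 1 - (fI F S T ν : ℚ)) := by
  intro ν hmin hlt
  have hden : fI F S T ν ≤ r * ((eInd F ν : ℤ) - 1) := Int.le_of_sub_one_lt hlt
  rcases Nat.eq_zero_or_pos r with rfl | hr
  -- for `r = 0` both sides equal `1`
  · have hf : fI F S T ν ≤ 0 := by simpa using hden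
    have hf' : (fI F S T ν : ℚ) < 1 := by exact_mod_cast hf.trans_lt one_pos
    simp [div_self (sub_pos.mpr hf').ne']
  obtain ⟨w, hw⟩ : ν.Nonempty := by
    rw [nonempty_iff_ne_empty]
    rintro rfl
    have he : eInd F ∅ = 0 :=
      card_eq_zero.mpr (filter_eq_empty_iff.mpr fun e _ h => notMem_empty _ (h _ e.out_fst_mem))
    simp [fI, he] at hden
    omega
  obtain ⟨u, hu, hwu⟩ := hmin w hw
  obtain ⟨hS, hT⟩ : (S ∩ ν).Nonempty ∧ (T ∩ ν).Nonempty := by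
    rcases hBip w u hwu with ⟨hwS, huT⟩ | ⟨hwT, huS⟩
    · exact ⟨⟨w, mem_inter.mpr ⟨hwS, hw⟩⟩, ⟨u, mem_inter.mpr ⟨huT, hu⟩⟩⟩
    · exact ⟨⟨u, mem_inter.mpr ⟨huS, hu⟩⟩, ⟨w, mem_inter.mpr ⟨hwT, hw⟩⟩⟩
  have hν : ν ⊆ S ∪ T := fun x hx => by
    obtain ⟨y, -, hxy⟩ := hmin x hx
    rcases hBip x y hxy with h | h <;> simp [h.1]
  have hf := fI_le_of_degree_le (S := S) hmin hDeg hT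
  have he := eInd_le_of_isBipartite hBip hDisj hΔ hS
  qify [card_pos.mpr hS] at hf he hden
  rw [card_eq_card_inter_add_card_inter hν hDisj, Nat.cast_add]
  exact sub_one_div_le_of_counts hr (by exact_mod_cast card_pos.mpr hS) hf he hden

/-- If `F` is `r`-semi-bounded with respect to `(S, T, v*)`, every vertex of `S` has degree at
most `Δ`, and `F` contains a cycle, then every `ν ∈ A_F` satisfies
`a(ν) ≥ (r - 1)/(rΔ - 1)`; consequently `a(F) ≥ (r - 1)/(rΔ - 1)`. -/
theorem stmt12 {V : Type*} [Fintype V] [DecidableEq V] (F : SimpleGraph V) [DecidableRel F.Adj]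
    (S T : Finset V) (vstar : V) (r : ℕ)
    (hUnion : S ∪ T = Finset.univ) (hDisj : Disjoint S T)
    (hBip : ∀ u v, F.Adj u v → (u ∈ S ∧ v ∈ T) ∨ (u ∈ T ∧ v ∈ S))
    (hv : vstar ∈ T) (hComp : ∀ u ∈ S, F.Adj vstar u)
    (hDeg : ∀ v ∈ T, v ≠ vstar → F.degree v ≤ r)
    (Δ : ℕ) (hΔ : ∀ u ∈ S, F.degree u ≤ Δ)
    (hcycle : ∃ ν : Finset V, ν.Nonempty ∧ ν.card ≤ eInd F ν) :
    ∀ ν : Finset V, (∀ w ∈ ν, ∃ u ∈ ν, F.Adj w u) →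
      fI F S T ν - 1 < (r : ℤ) * ((eInd F ν : ℤ) - 1) →
      ((r : ℚ) - 1) / ((r : ℚ) * (Δ : ℚ) - 1) ≤
        ((r : ℚ) * ((ν.card : ℚ) - 2) + 1 - (fI F S T ν : ℚ)) /
          ((r : ℚ) * ((eInd F ν : ℚ) - 1) + 1 - (fI F S T ν : ℚ)) :=
  stmt12_general F S T vstar r hDisj hBip hDeg Δ hΔ
end

section
/- Let F be r-semi-bounded with respect to (S, T, v*) such that every vertex in T \ {v*} has degree exactly r. Then for every ν ⊆ V(F) with e(F[ν]) ≥ 1 we have f(ν) = |S ∩ ν| + r(|T ∩ ν| − 1), and hence every ν ∈ A_F satisfies a(ν) = (r−1)(|S∩ν|−1) / (r(e(F[ν])−|T∩ν|)+1−|S∩ν|). -/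
open Finset

/-!
The maximum in `f(ν)` is attained by `v*` when `v* ∈ ν` (its degree `|S|` is at least `r`), and
otherwise by the `T`-endpoint of any edge of `F[ν]` (degree `r`). Either way it cancels exactly
one summand of `Σ deg_F(v)`, leaving `r` for each other vertex of `T ∩ ν`. The formula for `a(ν)`
is then algebra, using `|ν| = |S ∩ ν| + |T ∩ ν|`.
-/

namespace SemiBounded

variable {V : Type*} [Fintype V] {F : SimpleGraph V} [DecidableRel F.Adj]
  {S T : Finset V} {vstar : V} {r : ℕ}

theorem degree_vstar_eq_card (hDisj : Disjoint S T)
    (hBip : ∀ u v, F.Adj u v → (u ∈ S ∧ v ∈ T) ∨ (u ∈ T ∧ v ∈ S))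
    (hv : vstar ∈ T) (hComp : ∀ u ∈ S, F.Adj vstar u) : F.degree vstar = #S := by
  rw [← SimpleGraph.card_neighborFinset_eq_degree]
  congr 1
  ext u
  rw [SimpleGraph.mem_neighborFinset]
  refine ⟨fun h => ?_, hComp u⟩
  rcases hBip vstar u h with ⟨hS, -⟩ | ⟨-, hu⟩
  · exact absurd hv (Finset.disjoint_left.mp hDisj hS)
  · exact hu

variable [DecidableEq V]

theorem eInd_pos_iff {ν : Finset V} : 0 < eInd F ν ↔ ∃ x ∈ ν, ∃ y ∈ ν, F.Adj x y := by
  rw [eInd, Finset.card_pos]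
  constructor
  · rintro ⟨e, he⟩
    rw [Finset.mem_filter] at he
    induction e using Sym2.ind with
    | _ a b =>
      exact ⟨a, he.2 a (Sym2.mem_mk_left a b), b, he.2 b (Sym2.mem_mk_right a b),
        SimpleGraph.mem_edgeFinset.mp he.1⟩
  · rintro ⟨x, hx, y, hy, hxy⟩
    refine ⟨s(x, y), Finset.mem_filter.mpr ⟨SimpleGraph.mem_edgeFinset.mpr hxy, ?_⟩⟩
    intro v hv
    rcases Sym2.mem_iff.mp hv with rfl | rfl <;> assumption

theorem eInd_empty : eInd F ∅ = 0 :=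
  Nat.eq_zero_of_not_pos fun h => by simpa using eInd_pos_iff.mp h

theorem fI_empty : fI F S T ∅ = 0 := by
  simp [fI]

theorem card_inter_add_card_inter (hUnion : S ∪ T = Finset.univ)
    (hDisj : Disjoint S T) (ν : Finset V) : #(S ∩ ν) + #(T ∩ ν) = #ν := by
  rw [← Finset.card_union_of_disjoint (hDisj.mono Finset.inter_subset_left
    Finset.inter_subset_left), ← Finset.union_inter_distrib_right, hUnion, Finset.univ_inter]

theorem fI_eq_of_degree_eq_except {ν : Finset V} {m : V} (hm : m ∈ T ∩ ν)
    (hmν : ∃ u ∈ ν, F.Adj m u) (hr : ∀ v ∈ T ∩ ν, v ≠ m → F.degree v = r)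
    (hrm : r ≤ F.degree m) :
    fI F S T ν = (#(S ∩ ν) : ℤ) + r * ((#(T ∩ ν) : ℤ) - 1) := by
  have hsup : ((T ∩ ν).filter (fun v => ∃ u ∈ ν, F.Adj v u)).sup (fun v => F.degree v)
      = F.degree m := by
    refine le_antisymm (Finset.sup_le fun v hv => ?_)
      (Finset.le_sup (f := fun v => F.degree v) (Finset.mem_filter.mpr ⟨hm, hmν⟩))
    obtain rfl | hvm := eq_or_ne v m
    · exact le_rfl
    · exact (hr v (Finset.mem_filter.mp hv).1 hvm).trans_le hrm
  have hsum : ∑ v ∈ T ∩ ν, (F.degree v : ℤ) = F.degree m + r * ((#(T ∩ ν) : ℤ) - 1) := by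
    rw [← Finset.add_sum_erase _ _ hm, Finset.sum_congr rfl fun v hv =>
      congrArg Nat.cast (hr v (Finset.mem_of_mem_erase hv) (Finset.ne_of_mem_erase hv)),
      Finset.sum_const, Finset.card_erase_of_mem hm, nsmul_eq_mul,
      Nat.cast_sub (Finset.card_pos.mpr ⟨m, hm⟩)]
    push_cast
    ring
  rw [fI, hsup, hsum]
  ring

theorem fI_eq (hDisj : Disjoint S T)
    (hBip : ∀ u v, F.Adj u v → (u ∈ S ∧ v ∈ T) ∨ (u ∈ T ∧ v ∈ S))
    (hv : vstar ∈ T) (hComp : ∀ u ∈ S, F.Adj vstar u)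
    (hDegEq : ∀ v ∈ T, v ≠ vstar → F.degree v = r) (hSr : r ≤ #S)
    {ν : Finset V} (hν : 0 < eInd F ν) :
    fI F S T ν = (#(S ∩ ν) : ℤ) + r * ((#(T ∩ ν) : ℤ) - 1) := by
  obtain ⟨x, hxS, hx, y, hy, hxy⟩ : ∃ x ∈ S, x ∈ ν ∧ ∃ y ∈ T ∩ ν, F.Adj y x := by
    obtain ⟨a, ha, b, hb, hab⟩ := eInd_pos_iff.mp hν
    rcases hBip a b hab with ⟨haS, hbT⟩ | ⟨haT, hbS⟩
    · exact ⟨a, haS, ha, b, Finset.mem_inter.mpr ⟨hbT, hb⟩, hab.symm⟩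
    · exact ⟨b, hbS, hb, a, Finset.mem_inter.mpr ⟨haT, ha⟩, hab⟩
  have hr : ∀ v ∈ T ∩ ν, v ≠ vstar → F.degree v = r := fun v hv' =>
    hDegEq v (Finset.mem_inter.mp hv').1
  by_cases hvν : vstar ∈ ν
  · exact fI_eq_of_degree_eq_except (Finset.mem_inter.mpr ⟨hv, hvν⟩) ⟨x, hx, hComp x hxS⟩ hr
      ((degree_vstar_eq_card hDisj hBip hv hComp).symm ▸ hSr)
  · have hr' : ∀ v ∈ T ∩ ν, F.degree v = r := fun v hv' =>
      hr v hv' (ne_of_mem_of_not_mem (Finset.mem_inter.mp hv').2 hvν)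
    exact fI_eq_of_degree_eq_except hy ⟨x, hx, hxy⟩ (fun v hv' _ => hr' v hv') (hr' y hy).ge

end SemiBounded

open SemiBounded in
theorem stmt13_general {V : Type*} [Fintype V] [DecidableEq V] (F : SimpleGraph V) [DecidableRel F.Adj]
    (S T : Finset V) (vstar : V) (r : ℕ)
    (hUnion : S ∪ T = Finset.univ) (hDisj : Disjoint S T)
    (hBip : ∀ u v, F.Adj u v → (u ∈ S ∧ v ∈ T) ∨ (u ∈ T ∧ v ∈ S))
    (hv : vstar ∈ T) (hComp : ∀ u ∈ S, F.Adj vstar u)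
    (hDegEq : ∀ v ∈ T, v ≠ vstar → F.degree v = r) (hSr : r ≤ S.card) :
    (∀ ν : Finset V, 1 ≤ eInd F ν →
      fI F S T ν = ((S ∩ ν).card : ℤ) + (r : ℤ) * (((T ∩ ν).card : ℤ) - 1)) ∧
    (∀ ν : Finset V, (∀ w ∈ ν, ∃ u ∈ ν, F.Adj w u) →
      fI F S T ν - 1 < (r : ℤ) * ((eInd F ν : ℤ) - 1) →
      ((r : ℚ) * ((ν.card : ℚ) - 2) + 1 - (fI F S T ν : ℚ)) /
          ((r : ℚ) * ((eInd F ν : ℚ) - 1) + 1 - (fI F S T ν : ℚ))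
        = ((r : ℚ) - 1) * (((S ∩ ν).card : ℚ) - 1) /
            ((r : ℚ) * ((eInd F ν : ℚ) - ((T ∩ ν).card : ℚ)) + 1 - ((S ∩ ν).card : ℚ))) := by
  have key := fun ν (hν : 1 ≤ eInd F ν) => fI_eq hDisj hBip hv hComp hDegEq hSr hν
  refine ⟨key, fun ν hmin hlt => ?_⟩
  -- For `ν = ∅` the formula for `f` still holds, because then `ν ∈ A_F` forces `r = 0`.
  have hf : fI F S T ν = (#(S ∩ ν) : ℤ) + r * ((#(T ∩ ν) : ℤ) - 1) := by
    rcases ν.eq_empty_or_nonempty with rfl | ⟨w, hw⟩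
    · simp only [fI_empty, eInd_empty, Finset.inter_empty, Finset.card_empty] at hlt ⊢
      omega
    · obtain ⟨u, hu, hwu⟩ := hmin w hw
      exact key ν (eInd_pos_iff.mpr ⟨w, hw, u, hu, hwu⟩)
  have hcard : (#ν : ℚ) = #(S ∩ ν) + #(T ∩ ν) := by
    exact_mod_cast (card_inter_add_card_inter hUnion hDisj ν).symm
  rw [show (fI F S T ν : ℚ) = #(S ∩ ν) + r * ((#(T ∩ ν) : ℚ) - 1) by exact_mod_cast hf, hcard]
  congr 1 <;> ring

/-- If `F` is `r`-semi-bounded with respect to `(S, T, v*)`, every vertex of `T \ {v*}` has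
degree exactly `r`, and `|S| ≥ r`, then every `ν` with `e(F[ν]) ≥ 1` has
`f(ν) = |S ∩ ν| + r(|T ∩ ν| - 1)`, and every `ν ∈ A_F` has
`a(ν) = (r-1)(|S∩ν|-1) / (r(e(F[ν]) - |T∩ν|) + 1 - |S∩ν|)`. -/
theorem stmt13 {V : Type*} [Fintype V] [DecidableEq V] (F : SimpleGraph V) [DecidableRel F.Adj]
    (S T : Finset V) (vstar : V) (r : ℕ)
    (hUnion : S ∪ T = Finset.univ) (hDisj : Disjoint S T)
    (hBip : ∀ u v, F.Adj u v → (u ∈ S ∧ v ∈ T) ∨ (u ∈ T ∧ v ∈ S))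
    (hv : vstar ∈ T) (hComp : ∀ u ∈ S, F.Adj vstar u)
    (hDeg : ∀ v ∈ T, v ≠ vstar → F.degree v ≤ r)
    (hDegEq : ∀ v ∈ T, v ≠ vstar → F.degree v = r) (hSr : r ≤ S.card) :
    (∀ ν : Finset V, 1 ≤ eInd F ν →
      fI F S T ν = ((S ∩ ν).card : ℤ) + (r : ℤ) * (((T ∩ ν).card : ℤ) - 1)) ∧
    (∀ ν : Finset V, (∀ w ∈ ν, ∃ u ∈ ν, F.Adj w u) →
      fI F S T ν - 1 < (r : ℤ) * ((eInd F ν : ℤ) - 1) →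
      ((r : ℚ) * ((ν.card : ℚ) - 2) + 1 - (fI F S T ν : ℚ)) /
          ((r : ℚ) * ((eInd F ν : ℚ) - 1) + 1 - (fI F S T ν : ℚ))
        = ((r : ℚ) - 1) * (((S ∩ ν).card : ℚ) - 1) /
            ((r : ℚ) * ((eInd F ν : ℚ) - ((T ∩ ν).card : ℚ)) + 1 - ((S ∩ ν).card : ℚ))) :=
  stmt13_general F S T vstar r hUnion hDisj hBip hv hComp hDegEq hSr
end

section
/- Let Φ be a D-good collection of embeddings of F into G, let ν' ⊆ ν ⊆ V(F) with e(F[ν]) > 0 and e(F[ν']) > 0, and let ψ': F[ν'] → G be a partial embedding. Then the number of partial embeddings ψ: F[ν] → G with deg_Φ(ψ) ≥ D(ν)/2 and ψ restricted to ν' equal to ψ' is at most 2·D(ν')/D(ν). -/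
open Finset
open scoped Classical

/-- `deg_Φ(ψ)`: the number of maps `φ ∈ Φ` whose restriction to `ν` is `ψ`. -/
noncomputable def degPhi {V W : Type*} [Fintype V] [Fintype W] [DecidableEq W]
    (Φ : Finset (V → W)) (ν : Finset V) (ψ : {x // x ∈ ν} → W) : ℕ :=
  (Φ.filter (fun φ => ∀ v : {x // x ∈ ν}, φ v.1 = ψ v)).card

section Extensions

variable {V W : Type*} [Fintype V] [Fintype W] [DecidableEq V] [DecidableEq W]

/-- Each `φ ∈ Φ` restricting to `ψ'` on `ν'` is counted once, at its own restriction to `ν`. -/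
theorem sum_degPhi_extensions (Φ : Finset (V → W)) {ν' ν : Finset V} (hsub : ν' ⊆ ν)
    (ψ' : {x // x ∈ ν'} → W) :
    ∑ ψ ∈ (univ : Finset ({x // x ∈ ν} → W)).filter
        (fun ψ => ∀ (v : V) (hv : v ∈ ν'), ψ ⟨v, hsub hv⟩ = ψ' ⟨v, hv⟩),
      degPhi Φ ν ψ = degPhi Φ ν' ψ' := by
  have hmaps : ((Φ.filter fun φ => ∀ v : {x // x ∈ ν'}, φ v.1 = ψ' v : Finset (V → W)) :
      Set (V → W)).MapsTo (fun φ (v : {x // x ∈ ν}) => φ v.1)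
      ((univ : Finset ({x // x ∈ ν} → W)).filter
        (fun ψ => ∀ (v : V) (hv : v ∈ ν'), ψ ⟨v, hsub hv⟩ = ψ' ⟨v, hv⟩)) := by
    intro φ hφ
    simp only [coe_filter, Set.mem_ofPred_eq, mem_univ, true_and] at hφ ⊢
    exact fun v hv => hφ.2 ⟨v, hv⟩
  rw [degPhi, card_eq_sum_card_fiberwise hmaps]
  refine sum_congr rfl fun ψ hψ => congrArg card (ext fun φ => ?_)
  simp only [mem_filter, mem_univ, true_and] at hψ ⊢
  constructor
  · rintro ⟨hφ, hφψ⟩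
    refine ⟨⟨hφ, fun v => ?_⟩, funext hφψ⟩
    rw [← hψ v.1 v.2]
    exact hφψ ⟨v.1, hsub v.2⟩
  · rintro ⟨⟨hφ, -⟩, rfl⟩
    exact ⟨hφ, fun v => rfl⟩

/-- Markov's inequality for the fibres of the restriction map from `ν` to `ν'`. -/
theorem card_heavy_extensions_mul_le_degPhi (Φ : Finset (V → W)) {ν' ν : Finset V}
    (hsub : ν' ⊆ ν) (ψ' : {x // x ∈ ν'} → W) (t : ℝ) :
    (((univ : Finset ({x // x ∈ ν} → W)).filter
        (fun ψ => t ≤ (degPhi Φ ν ψ : ℝ) ∧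
          ∀ (v : V) (hv : v ∈ ν'), ψ ⟨v, hsub hv⟩ = ψ' ⟨v, hv⟩)).card : ℝ) * t
      ≤ degPhi Φ ν' ψ' := by
  calc _ = _ • t := (nsmul_eq_mul _ t).symm
    _ ≤ ∑ ψ ∈ (univ : Finset ({x // x ∈ ν} → W)).filter
          (fun ψ => t ≤ (degPhi Φ ν ψ : ℝ) ∧
            ∀ (v : V) (hv : v ∈ ν'), ψ ⟨v, hsub hv⟩ = ψ' ⟨v, hv⟩), (degPhi Φ ν ψ : ℝ) :=
      card_nsmul_le_sum _ _ _ fun ψ hψ => (mem_filter.1 hψ).2.1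
    _ ≤ ∑ ψ ∈ (univ : Finset ({x // x ∈ ν} → W)).filter
          (fun ψ => ∀ (v : V) (hv : v ∈ ν'), ψ ⟨v, hsub hv⟩ = ψ' ⟨v, hv⟩),
          (degPhi Φ ν ψ : ℝ) :=
      sum_le_sum_of_subset_of_nonneg (monotone_filter_right _ fun _ _ h => h.2)
        fun _ _ _ => Nat.cast_nonneg _
    _ = degPhi Φ ν' ψ' := by exact_mod_cast sum_degPhi_extensions Φ hsub ψ'

end Extensions

theorem stmt15_general {V W : Type*} [Fintype V] [Fintype W] [DecidableEq V] [DecidableEq W]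
    (F : SimpleGraph V) [DecidableRel F.Adj]
    (Φ : Finset (V → W))
    (D : Finset V → ℝ)
    (hDpos : ∀ μ : Finset V, 0 < eInd F μ → 0 < D μ)
    (hgood : ∀ (μ : Finset V), 0 < eInd F μ → ∀ ψ : {x // x ∈ μ} → W,
      (degPhi Φ μ ψ : ℝ) ≤ D μ)
    (ν' ν : Finset V) (hsub : ν' ⊆ ν) (hν : 0 < eInd F ν) (hν' : 0 < eInd F ν')
    (ψ' : {x // x ∈ ν'} → W) :
    (((Finset.univ : Finset ({x // x ∈ ν} → W)).filter
        (fun ψ => D ν / 2 ≤ (degPhi Φ ν ψ : ℝ) ∧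
          ∀ (v : V) (hv : v ∈ ν'), ψ ⟨v, hsub hv⟩ = ψ' ⟨v, hv⟩)).card : ℝ)
      ≤ 2 * D ν' / D ν := by
  have hcount := (card_heavy_extensions_mul_le_degPhi Φ hsub ψ' (D ν / 2)).trans
    (hgood ν' hν' ψ')
  rw [le_div_iff₀ (hDpos ν hν)]
  linarith

/-- If `Φ` is a `D`-good collection of embeddings of `F` into `G`, `ν' ⊆ ν` both induce at
least one edge, and `ψ' : F[ν'] → G` is a partial embedding, then the number of partial
embeddings `ψ : F[ν] → G` with `deg_Φ(ψ) ≥ D(ν)/2` whose restriction to `ν'` is `ψ'` is at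
most `2 D(ν')/D(ν)`. -/
theorem stmt15 {V W : Type*} [Fintype V] [Fintype W] [DecidableEq V] [DecidableEq W]
    (F : SimpleGraph V) (G : SimpleGraph W) [DecidableRel F.Adj] [DecidableRel G.Adj]
    (Φ : Finset (V → W))
    (hemb : ∀ φ ∈ Φ, Function.Injective φ ∧ ∀ u v : V, F.Adj u v → G.Adj (φ u) (φ v))
    (D : Finset V → ℝ)
    (hDpos : ∀ μ : Finset V, 0 < eInd F μ → 0 < D μ)
    (hgood : ∀ (μ : Finset V), 0 < eInd F μ → ∀ ψ : {x // x ∈ μ} → W,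
      (degPhi Φ μ ψ : ℝ) ≤ D μ)
    (ν' ν : Finset V) (hsub : ν' ⊆ ν) (hν : 0 < eInd F ν) (hν' : 0 < eInd F ν')
    (ψ' : {x // x ∈ ν'} → W) :
    (((Finset.univ : Finset ({x // x ∈ ν} → W)).filter
        (fun ψ => D ν / 2 ≤ (degPhi Φ ν ψ : ℝ) ∧
          ∀ (v : V) (hv : v ∈ ν'), ψ ⟨v, hsub hv⟩ = ψ' ⟨v, hv⟩)).card : ℝ)
      ≤ 2 * D ν' / D ν :=
  stmt15_general F Φ D hDpos hgood ν' ν hsub hν hν' ψ'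
end

section
/- Let M > 0, s > 0, 0 < δ < 1, and let a_1, …, a_m be real numbers summing to s with 1 ≤ a_j ≤ (1−δ)^j · M for each j. Then s·log(s) ≤ Σ_{j=1}^m a_j·log(a_j) + O(M/δ²); concretely there is an absolute constant K such that s·log(s) ≤ Σ_j a_j·log(a_j) + K·M/δ². -/
/-!
Write `s log s - Σ a_j log a_j = Σ a_j log (s / a_j)` and use `a log (s / a) ≤ 2 √(s a)`.
Since `s = Σ a_j ≤ M Σ (1 - δ)^j ≤ M / δ ≤ M / δ²`, we get `√(s a_j) ≤ (M / δ) √(1 - δ)^j`,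
and `√(1 - δ) ≤ 1 - δ/2` makes these sum to at most `2 M / δ²`.
-/

open Finset

lemma sum_Icc_one_pow_le_one_div {x : ℝ} (hx0 : 0 ≤ x) (hx1 : x < 1) (m : ℕ) :
    ∑ j ∈ Icc 1 m, x ^ j ≤ 1 / (1 - x) := by
  rw [← Ico_add_one_right_eq_Icc]
  calc ∑ j ∈ Ico 1 (m + 1), x ^ j ≤ x ^ 1 / (1 - x) := geom_sum_Ico_le_of_lt_one hx0 hx1
    _ ≤ 1 / (1 - x) := by gcongr; linarith

/-- The `sqrt`-free form of `a log (s / a) ≤ 2 √(s a)`. -/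
lemma mul_log_le_mul_log_add_of_mul_le_sq {a s c : ℝ} (ha : 0 < a) (hs : 0 < s) (hc : 0 ≤ c)
    (hsa : s * a ≤ c ^ 2) : a * Real.log s ≤ a * Real.log a + 2 * c := by
  have hc : 0 < c := by
    rcases hc.eq_or_lt with rfl | hc
    · nlinarith [mul_pos hs ha]
    · exact hc
  have hca : 0 < c / a := div_pos hc ha
  have hlog : Real.log (s / a) ≤ 2 * (c / a) :=
    calc Real.log (s / a) ≤ Real.log ((c / a) ^ 2) := by
          apply Real.log_le_log (div_pos hs ha)
          rw [div_pow, le_div_iff₀ (by positivity), sq, ← mul_assoc, div_mul_cancel₀ _ ha.ne']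
          exact hsa
      _ = 2 * Real.log (c / a) := by rw [Real.log_pow]; norm_num
      _ ≤ 2 * (c / a) := by linarith [Real.log_le_sub_one_of_pos hca]
  rw [Real.log_div hs.ne' ha.ne'] at hlog
  have := mul_le_mul_of_nonneg_left hlog ha.le
  rw [mul_sub, mul_left_comm, mul_div_cancel₀ _ ha.ne'] at this
  linarith

lemma mul_log_sum_le_sum_mul_log_add {ι : Type*} {t : Finset ι} {a c : ι → ℝ} {s : ℝ}
    (hsum : ∑ j ∈ t, a j = s) (hs : 0 < s) (ha : ∀ j ∈ t, 0 < a j) (hc : ∀ j ∈ t, 0 ≤ c j)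
    (hsa : ∀ j ∈ t, s * a j ≤ c j ^ 2) :
    s * Real.log s ≤ ∑ j ∈ t, a j * Real.log (a j) + 2 * ∑ j ∈ t, c j := by
  calc s * Real.log s = ∑ j ∈ t, a j * Real.log s := by rw [← sum_mul, hsum]
    _ ≤ ∑ j ∈ t, (a j * Real.log (a j) + 2 * c j) := sum_le_sum fun j hj =>
        mul_log_le_mul_log_add_of_mul_le_sq (ha j hj) hs (hc j hj) (hsa j hj)
    _ = ∑ j ∈ t, a j * Real.log (a j) + 2 * ∑ j ∈ t, c j := by
        rw [sum_add_distrib, mul_sum]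

/-- (Collares–Morris)  There is an absolute constant `K` such that: for all `M, s > 0`,
`0 < δ < 1`, and real numbers `a_1, …, a_m` summing to `s` with `1 ≤ a_j ≤ (1 - δ)^j M` for
each `j`, we have `s log s ≤ Σ_j a_j log a_j + K M / δ²`. -/
theorem stmt16 :
    ∃ K : ℝ, 0 < K ∧ ∀ (M s δ : ℝ) (m : ℕ) (a : ℕ → ℝ),
      0 < M → 0 < s → 0 < δ → δ < 1 →
      (∑ j ∈ Finset.Icc 1 m, a j) = s →
      (∀ j ∈ Finset.Icc 1 m, 1 ≤ a j ∧ a j ≤ (1 - δ) ^ j * M) →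
      s * Real.log s ≤ (∑ j ∈ Finset.Icc 1 m, a j * Real.log (a j)) + K * M / δ ^ 2 := by
  refine ⟨4, by norm_num, fun M s δ m a hM hs hδ0 hδ1 hsum ha => ?_⟩
  have hs_le : s ≤ M / δ ^ 2 :=
    calc s ≤ ∑ j ∈ Icc 1 m, (1 - δ) ^ j * M := hsum ▸ sum_le_sum fun j hj => (ha j hj).2
      _ ≤ 1 / (1 - (1 - δ)) * M := by
        rw [← sum_mul]; gcongr; exact sum_Icc_one_pow_le_one_div (by linarith) (by linarith) m
      _ ≤ M / δ ^ 2 := by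
        rw [sub_sub_cancel, one_div_mul_eq_div]
        exact div_le_div_of_nonneg_left hM.le (by positivity) (by nlinarith)
  have hsa : ∀ j ∈ Icc 1 m, s * a j ≤ (M / δ * (1 - δ / 2) ^ j) ^ 2 := fun j hj =>
    calc s * a j ≤ M / δ ^ 2 * ((1 - δ) ^ j * M) :=
          mul_le_mul hs_le (ha j hj).2 (by linarith [(ha j hj).1]) (by positivity)
      _ ≤ M / δ ^ 2 * (((1 - δ / 2) ^ 2) ^ j * M) := by
          gcongr
          nlinarith [sq_nonneg δ]
      _ = (M / δ * (1 - δ / 2) ^ j) ^ 2 := by rw [← pow_mul, mul_comm 2 j, pow_mul]; ring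
  have hgeom : ∑ j ∈ Icc 1 m, (1 - δ / 2) ^ j ≤ 2 / δ := by
    convert sum_Icc_one_pow_le_one_div (x := 1 - δ / 2) (by linarith) (by linarith) m using 1
    rw [sub_sub_cancel, one_div_div]
  have hr : 0 ≤ 1 - δ / 2 := by linarith
  calc s * Real.log s ≤ ∑ j ∈ Icc 1 m, a j * Real.log (a j)
        + 2 * ∑ j ∈ Icc 1 m, M / δ * (1 - δ / 2) ^ j :=
        mul_log_sum_le_sum_mul_log_add hsum hs (fun j hj => by linarith [(ha j hj).1])
          (fun j _ => by positivity) hsa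
    _ ≤ ∑ j ∈ Icc 1 m, a j * Real.log (a j) + 2 * (M / δ * (2 / δ)) := by
        rw [← mul_sum]; gcongr
    _ = ∑ j ∈ Icc 1 m, a j * Real.log (a j) + 4 * M / δ ^ 2 := by ring
end
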